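/- arXiv:1811.03880 — 5 statements merged into one kernel-verified Lean document; each statement's English description precedes it below -/
import Mathlib

section
/- Let Ω be a regular uncountable cardinal such that for every ordinal α < ord(Ω) there is no surjection from V_α = {x : x is a ZF-set of rank < α} onto a set of cardinality Ω. Let P be the poset whose conditions are the finite partial functions p defined on pairs (α,n), with α an ordinal, 0 < α < ord(Ω), and n a natural number, such that p(α,n) is a ZF-set of rank less than α, ordered by reverse inclusion. Then P has the Ω-chain condition: there is no family (p_β)_{β<Ω} of pairwise incompatible conditions of P; equivalently, every pairwise-incompatible subset of P has cardinality strictly less than Ω. -/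
universe u

open Cardinal

/-- A condition of the forcing: a finite partial function `p`, defined on pairs `(α, n)` with
`α` an ordinal, `0 < α < Λ`, and `n` a natural number, such that `p (α, n)` is a ZF-set of rank
less than `α`.  We code `p` as its (functional) graph. -/
def IsCond (Λ : Ordinal.{u}) (p : Set ((Ordinal.{u} × ℕ) × ZFSet.{u})) : Prop :=
  p.Finite ∧
    (∀ a x y, (a, x) ∈ p → (a, y) ∈ p → x = y) ∧
    ∀ a x, (a, x) ∈ p → 0 < a.1 ∧ a.1 < Λ ∧ x.rank < a.1

/-- The poset of conditions. -/
def Cond (Λ : Ordinal.{u}) : Type (u + 1) :=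
  {p : Set ((Ordinal.{u} × ℕ) × ZFSet.{u}) // IsCond Λ p}

/-- Conditions are ordered by reverse inclusion: `p ≤ q` iff `p` extends `q`. -/
instance (Λ : Ordinal.{u}) : PartialOrder (Cond Λ) where
  le p q := q.1 ⊆ p.1
  le_refl p := Set.Subset.refl _
  le_trans p q r hpq hqr := Set.Subset.trans hqr hpq
  le_antisymm p q hpq hqp := Subtype.ext (Set.Subset.antisymm hqp hpq)

/-- Two conditions are compatible iff they have a common extension. -/
def Compat {Λ : Ordinal.{u}} (p q : Cond Λ) : Prop :=
  ∃ r, r ≤ p ∧ r ≤ q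

/-!
Suppose `κ` conditions are pairwise incompatible. By the Δ-system lemma, `κ` of them have
domains forming a Δ-system with some finite root `r`. Two such conditions can only disagree on
`r`, so they are told apart by their restrictions to `r`. But at a point `(α, n)` of `r` every
value lies in `V_α`, which has fewer than `κ` elements, so there are fewer than `κ` possible
restrictions.
-/

universe v

open Set

section DeltaSystem

variable {ι X : Type v} {κ : Cardinal.{v}}

theorem exists_mem_forall_disjoint_of_forall_mk_lt (hκ : κ.IsRegular) (a : ι → Finset X)
    {s T : Set ι} (hs : κ ≤ #s) (hsmall : ∀ x, #{i ∈ s | x ∈ a i} < κ) (hT : #T < κ) :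
    ∃ j ∈ s, j ∉ T ∧ ∀ i ∈ T, Disjoint (a j) (a i) := by
  set bad : Set ι := ⋃ i ∈ T, ⋃ x ∈ (a i : Set X), {k ∈ s | x ∈ a k}
  have hbad : #bad < κ := by
    refine (card_biUnion_lt_iff_forall_of_isRegular hκ hT).2 fun i _ => ?_
    refine (card_biUnion_lt_iff_forall_of_isRegular hκ ?_).2 fun x _ => hsmall x
    exact (lt_aleph0_of_finite _).trans_le hκ.aleph0_le
  have hsU : ¬ s ⊆ T ∪ bad := fun h =>
    (le_trans hs (le_trans (mk_le_mk_of_subset h) (mk_union_le T bad))).not_gt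
      (add_lt_of_lt hκ.aleph0_le hT hbad)
  obtain ⟨j, hjs, hj⟩ := not_subset.1 hsU
  refine ⟨j, hjs, fun h => hj (Or.inl h), fun i hi => Finset.disjoint_left.2 fun x hxj hxi => ?_⟩
  exact hj (Or.inr (mem_biUnion hi (mem_biUnion (Finset.mem_coe.2 hxi) ⟨hjs, hxj⟩)))

theorem exists_pairwiseDisjoint_of_forall_mk_lt (hκ : κ.IsRegular) (a : ι → Finset X)
    {s : Set ι} (hs : κ ≤ #s) (hsmall : ∀ x, #{i ∈ s | x ∈ a i} < κ) :
    ∃ T ⊆ s, κ ≤ #T ∧ T.PairwiseDisjoint a := by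
  obtain ⟨T, ⟨hTs, hTa⟩, hmax⟩ := zorn_subset {T | T ⊆ s ∧ T.PairwiseDisjoint a}
    fun c hc hchain => ⟨⋃₀ c, ⟨sUnion_subset fun t ht => (hc ht).1,
      (hchain.pairwiseDisjoint_sUnion a).2 fun t ht => (hc ht).2⟩,
      fun _ => subset_sUnion_of_mem⟩
  refine ⟨T, hTs, not_lt.1 fun hT => ?_, hTa⟩
  obtain ⟨j, hjs, hjT, hj⟩ := exists_mem_forall_disjoint_of_forall_mk_lt hκ a hs hsmall hT
  exact hjT <| hmax ⟨insert_subset hjs hTs, hTa.insert fun i hi _ => hj i hi⟩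
    (subset_insert j T) (mem_insert j T)

variable [DecidableEq X]

/- If some point lies in `κ` of the sets, remove it and recurse; otherwise, by regularity of `κ`,
a maximal pairwise-disjoint subfamily has `κ` members. -/
theorem exists_deltaSystem_of_card_le (hκ : κ.IsRegular) (n : ℕ) :
    ∀ (a : ι → Finset X) (s : Set ι), κ ≤ #s → (∀ i ∈ s, (a i).card ≤ n) →
      ∃ r, ∃ T ⊆ s, κ ≤ #T ∧ T.Pairwise fun i j => a i ∩ a j = r := by
  induction n with
  | zero =>
    refine fun a s hs ha => ⟨∅, s, subset_rfl, hs, fun i hi j _ _ => ?_⟩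
    show a i ∩ a j = ∅
    rw [Finset.card_eq_zero.1 (Nat.le_zero.1 (ha i hi)), Finset.empty_inter]
  | succ n ih =>
    intro a s hs ha
    by_cases hx : ∃ x, κ ≤ #{i ∈ s | x ∈ a i}
    · obtain ⟨x, hx⟩ := hx
      obtain ⟨r, T, hTs, hT, hr⟩ := ih (fun i => (a i).erase x) {i ∈ s | x ∈ a i} hx
        fun i hi => by rw [Finset.card_erase_of_mem hi.2]; have := ha i hi.1; omega
      refine ⟨insert x r, T, hTs.trans (sep_subset _ _), hT, fun i hi j hj hij => ?_⟩
      rw [← hr hi hj hij, Finset.erase_inter, Finset.inter_erase, Finset.erase_idem,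
        Finset.insert_erase]
      exact Finset.mem_inter.2 ⟨(hTs hi).2, (hTs hj).2⟩
    · simp only [not_exists, not_le] at hx
      obtain ⟨T, hTs, hT, hTa⟩ := exists_pairwiseDisjoint_of_forall_mk_lt hκ a hs hx
      exact ⟨∅, T, hTs, hT, hTa.mono' fun _ _ => Finset.disjoint_iff_inter_eq_empty.1⟩

theorem exists_deltaSystem (hκ : κ.IsRegular) (hunc : ℵ₀ < κ) (a : ι → Finset X)
    (hι : κ ≤ #ι) : ∃ r, ∃ T : Set ι, κ ≤ #T ∧ T.Pairwise fun i j => a i ∩ a j = r := by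
  obtain ⟨n, hn⟩ := infinite_pigeonhole_card (fun i => ULift.up.{v} (a i).card) κ hι
    hκ.aleph0_le (by rwa [hκ.cof_ord, mk_uLift, mk_nat, lift_aleph0])
  obtain ⟨r, T, -, hT, hr⟩ := exists_deltaSystem_of_card_le hκ n.down a _ hn
    fun i hi => (congrArg ULift.down hi).le
  exact ⟨r, T, hT, hr⟩

end DeltaSystem

theorem Cardinal.mk_finset_lt {α : Type v} {κ : Cardinal.{v}} (hκ : ℵ₀ ≤ κ) (h : #α < κ) :
    #(Finset α) < κ := by
  rcases finite_or_infinite α with hα | hα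
  · exact (lt_aleph0_of_finite _).trans_le hκ
  · rwa [mk_finset_of_infinite]

theorem Cardinal.mk_lt_of_forall_not_surjective {α : Type v} {κ : Cardinal.{v}} (hκ : κ ≠ 0)
    (h : ¬ ∃ (B : Type v) (f : α → B), Function.Surjective f ∧ #B = κ) : #α < κ := by
  by_contra! hle
  rw [← mk_out κ] at hle hκ
  obtain ⟨f⟩ := hle
  have : Nonempty κ.out := mk_ne_zero_iff.1 hκ
  exact h ⟨κ.out, Function.invFun f, Function.invFun_surjective f.injective, mk_out κ⟩

section PartialFunctions

variable {ι D V : Type v} {κ : Cardinal.{v}}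

theorem mk_lt_of_pairwise_conflict (hκ : κ.IsRegular) (hunc : ℵ₀ < κ) (p : ι → Set (D × V))
    (hfin : ∀ i, (p i).Finite) (hfun : ∀ i d x y, (d, x) ∈ p i → (d, y) ∈ p i → x = y)
    (hvalues : ∀ d, #{x | ∃ i, (d, x) ∈ p i} < κ)
    (hconf : Pairwise fun i j => ∃ d x y, (d, x) ∈ p i ∧ (d, y) ∈ p j ∧ x ≠ y) :
    #ι < κ := by
  classical
  by_contra! hι
  obtain ⟨r, T, hT, hΔ⟩ :=
    exists_deltaSystem hκ hunc (fun i => (hfin i).toFinset.image Prod.fst) hι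
  set S : Set (D × V) := {w | w.1 ∈ r ∧ ∃ i, w ∈ p i}
  have hS : #S < κ := by
    have hSU : S ⊆ ⋃ d ∈ (r : Set D), Prod.mk d '' {x | ∃ i, (d, x) ∈ p i} :=
      fun w ⟨hw, hwp⟩ => mem_biUnion hw ⟨w.2, hwp, rfl⟩
    refine (mk_le_mk_of_subset hSU).trans_lt
      ((card_biUnion_lt_iff_forall_of_isRegular hκ ?_).2 fun d _ =>
        mk_image_le.trans_lt (hvalues d))
    exact (lt_aleph0_of_finite _).trans hunc
  let t : T → Finset S := fun i => ((hfin i).preimage Subtype.val_injective.injOn).toFinset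
  have ht : ∀ i w, w ∈ t i ↔ w.1 ∈ p i := fun i w => by simp [t]
  have htinj : Function.Injective t := by
    intro i j hij
    by_contra hne
    obtain ⟨d, x, y, hx, hy, hxy⟩ := hconf (Subtype.val_injective.ne hne)
    have hd : d ∈ r := by
      rw [← hΔ i.2 j.2 (Subtype.val_injective.ne hne)]
      simp only [Finset.mem_inter, Finset.mem_image, Set.Finite.mem_toFinset]
      exact ⟨⟨_, hx, rfl⟩, ⟨_, hy, rfl⟩⟩
    have hxj := (ht j ⟨(d, x), hd, i, hx⟩).1 (hij ▸ (ht i _).2 hx)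
    exact hxy (hfun j d x y hxj hy)
  exact (mk_finset_lt hκ.aleph0_le hS).not_ge (le_trans hT (mk_le_of_injective htinj))

end PartialFunctions

namespace Cond

variable {Λ : Ordinal.{u}}

theorem exists_conflict_of_not_compat {p q : Cond Λ} (h : ¬ Compat p q) :
    ∃ a x y, (a, x) ∈ p.1 ∧ (a, y) ∈ q.1 ∧ x ≠ y := by
  by_contra! hpq
  have hfun : ∀ a x y, (a, x) ∈ p.1 ∪ q.1 → (a, y) ∈ p.1 ∪ q.1 → x = y := by
    rintro a x y (hx | hx) (hy | hy)
    · exact p.2.2.1 a x y hx hy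
    · exact hpq a x y hx hy
    · exact (hpq a y x hy hx).symm
    · exact q.2.2.1 a x y hx hy
  have hdom : ∀ a x, (a, x) ∈ p.1 ∪ q.1 → 0 < a.1 ∧ a.1 < Λ ∧ x.rank < a.1 := by
    rintro a x (hx | hx)
    exacts [p.2.2.2 a x hx, q.2.2.2 a x hx]
  exact h ⟨⟨p.1 ∪ q.1, p.2.1.union q.2.1, hfun, hdom⟩, subset_union_left, subset_union_right⟩

theorem mk_lt_of_pairwise_not_compat {κ : Cardinal.{u + 1}} (hκ : κ.IsRegular) (hunc : ℵ₀ < κ)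
    (hsize : ∀ α < Λ, #{x : ZFSet.{u} // x.rank < α} < κ) {ι : Type (u + 1)} (p : ι → Cond Λ)
    (hp : Pairwise fun i j => ¬ Compat (p i) (p j)) : #ι < κ := by
  refine mk_lt_of_pairwise_conflict hκ hunc (fun i => (p i).1) (fun i => (p i).2.1)
    (fun i => (p i).2.2.1) (fun d => ?_) fun i j hij => exists_conflict_of_not_compat (hp hij)
  by_cases hd : d.1 < Λ
  · refine (mk_le_mk_of_subset (t := {x : ZFSet.{u} | x.rank < d.1}) ?_).trans_lt (hsize _ hd)
    rintro x ⟨i, hx⟩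
    exact ((p i).2.2.2 d x hx).2.2
  · convert hκ.pos
    refine mk_set_eq_zero_iff.2 (eq_empty_of_forall_notMem ?_)
    rintro x ⟨i, hx⟩
    exact hd ((p i).2.2.2 d x hx).2.1

end Cond

/-- Let `Ω` be a regular uncountable cardinal such that for every ordinal `α < Ω.ord` there is
no surjection from `V_α = {x : ZFSet // x.rank < α}` onto a set of cardinality `Ω`.  Then the
poset of conditions for `Λ = Ω.ord` has the `Ω`-chain condition: there is no family
`(p_β)_{β < Ω.ord}` of pairwise incompatible conditions; equivalently, every
pairwise-incompatible subset has cardinality strictly less than `Ω`. -/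
theorem cond_omega_cc (Ω : Cardinal.{u}) (hreg : Ω.IsRegular) (hunc : ℵ₀ < Ω)
    (hsmall : ∀ α : Ordinal.{u}, α < Ω.ord →
      ¬ ∃ (B : Type (u + 1)) (f : {x : ZFSet.{u} // x.rank < α} → B),
          Function.Surjective f ∧ #B = Cardinal.lift.{u + 1} Ω) :
    (¬ ∃ p : {β : Ordinal.{u} // β < Ω.ord} → Cond Ω.ord,
        ∀ i j, i ≠ j → ¬ Compat (p i) (p j)) ∧
      ∀ A : Set (Cond Ω.ord),
        (∀ p ∈ A, ∀ q ∈ A, p ≠ q → ¬ Compat p q) → #A < Cardinal.lift.{u + 1} Ω := by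
  have hsize : ∀ α < Ω.ord, #{x : ZFSet.{u} // x.rank < α} < lift.{u + 1} Ω := fun α hα =>
    mk_lt_of_forall_not_surjective hreg.lift.ne_zero (hsmall α hα)
  have hcc : ∀ {ι : Type (u + 1)} (p : ι → Cond Ω.ord),
      Pairwise (fun i j => ¬ Compat (p i) (p j)) → #ι < lift.{u + 1} Ω :=
    Cond.mk_lt_of_pairwise_not_compat hreg.lift (aleph0_lt_lift.2 hunc) hsize
  refine ⟨fun ⟨p, hp⟩ => (hcc p hp).ne ?_, fun A hA => hcc (Subtype.val : A → Cond Ω.ord)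
    fun i j hij => hA _ i.2 _ j.2 (Subtype.val_injective.ne hij)⟩
  exact (mk_Iio_ordinal Ω.ord).trans (by rw [card_ord])
end

section
/- Let Ω be an ordinal and let P be the poset whose conditions are the finite partial functions p defined on pairs (α,n), with α an ordinal, 0 < α < Ω, and n a natural number, such that p(α,n) is a ZF-set of rank less than α, ordered by reverse inclusion. Then P is homogeneous: for all conditions p, q ∈ P there exists an order automorphism π of P such that π(p) and q are compatible. -/
universe u

/-- Renaming the natural-number coordinates by a permutation `σ`. -/
def colMap (σ : ℕ ≃ ℕ) : ((Ordinal.{u} × ℕ) × ZFSet.{u}) ≃ ((Ordinal.{u} × ℕ) × ZFSet.{u}) :=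
  Equiv.prodCongr (Equiv.prodCongr (Equiv.refl _) σ) (Equiv.refl _)

@[simp] lemma colMap_apply (σ : ℕ ≃ ℕ) (α : Ordinal.{u}) (n : ℕ) (x : ZFSet.{u}) :
    colMap σ ((α, n), x) = ((α, σ n), x) := rfl

lemma isCond_image {Λ : Ordinal.{u}} (σ : ℕ ≃ ℕ) {s : Set ((Ordinal.{u} × ℕ) × ZFSet.{u})}
    (hs : IsCond Λ s) : IsCond Λ (colMap σ '' s) := by
  obtain ⟨hfin, hfun, hbd⟩ := hs
  refine ⟨hfin.image _, ?_, ?_⟩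
  · rintro ⟨α, n⟩ x y ⟨⟨⟨β, m⟩, z⟩, hz, hz'⟩ ⟨⟨⟨γ, k⟩, w⟩, hw, hw'⟩
    simp only [colMap_apply, Prod.mk.injEq] at hz' hw'
    obtain ⟨⟨rfl, hm⟩, rfl⟩ := hz'
    obtain ⟨⟨rfl, hk⟩, rfl⟩ := hw'
    have : m = k := σ.injective (hm.trans hk.symm)
    subst this
    exact hfun _ _ _ hz hw
  · rintro ⟨α, n⟩ x ⟨⟨⟨β, m⟩, z⟩, hz, hz'⟩
    simp only [colMap_apply, Prod.mk.injEq] at hz'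
    obtain ⟨⟨rfl, _⟩, rfl⟩ := hz'
    exact hbd (β, m) z hz

/-- The order automorphism of `Cond Λ` induced by a permutation of ℕ. -/
def condMap (Λ : Ordinal.{u}) (σ : ℕ ≃ ℕ) : Cond Λ ≃o Cond Λ where
  toFun p := ⟨colMap σ '' p.1, isCond_image σ p.2⟩
  invFun p := ⟨colMap σ.symm '' p.1, isCond_image σ.symm p.2⟩
  left_inv p := Subtype.ext <| by
    show colMap σ.symm '' (colMap σ '' p.1) = p.1
    have h : colMap σ.symm = ⇑(colMap σ).symm := rfl
    rw [h, Set.image_image]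
    simp
  right_inv p := Subtype.ext <| by
    show colMap σ '' (colMap σ.symm '' p.1) = p.1
    have h : colMap σ.symm = ⇑(colMap σ).symm := rfl
    rw [h, Set.image_image]
    simp
  map_rel_iff' {a b} := by
    show colMap σ '' b.1 ⊆ colMap σ '' a.1 ↔ b.1 ⊆ a.1
    exact Set.image_subset_image_iff (colMap σ).injective

/-- The involution of ℕ swapping `[0, N)` with `[N, 2N)`. -/
def swapN (N : ℕ) : ℕ → ℕ := fun n => if n < N then n + N else if n < 2 * N then n - N else n

lemma swapN_invol (N : ℕ) : Function.Involutive (swapN N) := by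
  intro n; unfold swapN; split_ifs <;> omega

/-- The poset of conditions is homogeneous: for all conditions `p, q` there is an order
automorphism `π` of the poset such that `π p` and `q` are compatible. -/
theorem cond_homogeneous (Λ : Ordinal.{u}) (p q : Cond Λ) :
    ∃ π : Cond Λ ≃o Cond Λ, Compat (π p) q := by
  have hfin : ((fun z : (Ordinal.{u} × ℕ) × ZFSet.{u} => z.1.2) '' (p.1 ∪ q.1)).Finite :=
    (p.2.1.union q.2.1).image _
  obtain ⟨M, hM⟩ := hfin.bddAbove
  set N := M + 1 with hNdef
  have hN : ∀ z ∈ p.1 ∪ q.1, z.1.2 < N := by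
    intro z hz
    have : z.1.2 ≤ M := hM ⟨z, hz, rfl⟩
    omega
  set σ : ℕ ≃ ℕ := (swapN_invol N).toPerm with hσdef
  have hσ : ∀ n, σ n = swapN N n := fun n => rfl
  refine ⟨condMap Λ σ, ?_⟩
  -- key: second coordinates of the domain of `π p` are ≥ N, those of `q` are < N
  have hπp : ∀ a x, (a, x) ∈ (condMap Λ σ p).1 → N ≤ a.2 := by
    rintro ⟨α, n⟩ x ⟨⟨⟨β, m⟩, z⟩, hz, hz'⟩
    simp only [colMap_apply, Prod.mk.injEq] at hz'
    obtain ⟨⟨rfl, hm⟩, rfl⟩ := hz'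
    have hmN : m < N := hN _ (Or.inl hz)
    rw [← hm, hσ]
    unfold swapN
    split_ifs
    all_goals omega
  have hq : ∀ a x, (a, x) ∈ q.1 → a.2 < N := fun a x h => hN _ (Or.inr h)
  have hcond : IsCond Λ ((condMap Λ σ p).1 ∪ q.1) := by
    refine ⟨(condMap Λ σ p).2.1.union q.2.1, ?_, ?_⟩
    · rintro a x y (hx | hx) (hy | hy)
      · exact (condMap Λ σ p).2.2.1 _ _ _ hx hy
      · exact absurd (hq _ _ hy) (not_lt.2 (hπp _ _ hx))
      · exact absurd (hq _ _ hx) (not_lt.2 (hπp _ _ hy))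
      · exact q.2.2.1 _ _ _ hx hy
    · rintro a x (hx | hx)
      · exact (condMap Λ σ p).2.2.2 _ _ hx
      · exact q.2.2.2 _ _ hx
  exact ⟨⟨_, hcond⟩, Set.subset_union_left, Set.subset_union_right⟩
end

section
/- Let θ and λ be ordinals, let <_T be an iteration tree order on θ and <_X an iteration tree order on λ, and let (γ_β, δ_β)_{β<θ} be a T1-system from (θ,<_T) to (λ,<_X), with intervals I_β = [γ_β, δ_β]_X. If ξ < θ, α ∈ I_ξ, and η ≤_X α, then there exists ζ ≤_T ξ such that η ∈ I_ζ. -/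
universe u

/-- `r` is an iteration tree order on the ordinals below `l`:  a strict partial order such
that (i) `r β α → β < α`; (ii) `r 0 α` for all `0 < α < l`; (iii) each branch `[0, α)_r` is
linearly ordered by `r`; (iv) for each successor `α + 1 < l` the branch `[0, α + 1)_r` has an
`r`-greatest element; (v) for each limit `α < l` the branch `[0, α)_r` is cofinal in `α` and
closed in `α`. -/
structure IsTreeOrder (l : Ordinal.{u}) (r : Ordinal.{u} → Ordinal.{u} → Prop) : Prop where
  lt_of_rel : ∀ {α β}, r α β → α < β
  lt_len : ∀ {α β}, r α β → β < l
  zero_rel : ∀ {α}, 0 < α → α < l → r 0 α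
  rel_trans : ∀ {α β γ}, r α β → r β γ → r α γ
  branch_linear : ∀ {α β γ}, r α γ → r β γ → r α β ∨ α = β ∨ r β α
  pred_exists : ∀ {α}, α + 1 < l → ∃ p, r p (α + 1) ∧ ∀ γ, r γ (α + 1) → γ = p ∨ r γ p
  limit_cofinal : ∀ {α}, α < l → Order.IsSuccLimit α → ∀ γ < α, ∃ β, γ ≤ β ∧ r β α
  limit_closed : ∀ {α}, α < l → Order.IsSuccLimit α → ∀ {μ}, Order.IsSuccLimit μ → μ < α →
    (∀ γ < μ, ∃ β, γ ≤ β ∧ β < μ ∧ r β α) → r μ α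

/-- The reflexivization of the strict relation `r`: `a ≤_r b` iff `a = b ∨ r a b`. -/
def RelLE (r : Ordinal.{u} → Ordinal.{u} → Prop) (a b : Ordinal.{u}) : Prop :=
  a = b ∨ r a b

/-- `p` is the `r`-greatest element of the branch `[0, α)_r`, i.e. `p = pred_r α`. -/
def IsTreePred (r : Ordinal.{u} → Ordinal.{u} → Prop) (p α : Ordinal.{u}) : Prop :=
  r p α ∧ ∀ γ, r γ α → RelLE r γ p

/-- `ξ ∈ I_β = [γ β, δ β]_{rX} = {ξ : γ β ≤_{rX} ξ ∧ ξ ≤_{rX} δ β}`. -/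
def MemInterval (rX : Ordinal.{u} → Ordinal.{u} → Prop) (γ δ : Ordinal.{u} → Ordinal.{u})
    (β ξ : Ordinal.{u}) : Prop :=
  RelLE rX (γ β) ξ ∧ RelLE rX ξ (δ β)

/-- A T1-system from `(θ, rT)` to `(l, rX)`: ordinals `γ β ≤ δ β < l` with `γ β ≤_{rX} δ β`
for `β < θ`, such that `γ 0 = 0`, `β ↦ γ β` is strictly increasing and continuous,
`β₀ <_T β₁ ↔ γ β₀ <_X γ β₁`, `γ (β + 1) = δ β + 1`, and `pred_X (γ (β + 1)) ∈ I_{pred_T (β+1)}`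
whenever `β + 1 < θ`.  (These are exactly the tree-structure-preservation requirements,
condition T1, of a tree embedding.) -/
structure IsT1System (θ l : Ordinal.{u}) (rT rX : Ordinal.{u} → Ordinal.{u} → Prop)
    (γ δ : Ordinal.{u} → Ordinal.{u}) : Prop where
  gamma_le_delta : ∀ β < θ, γ β ≤ δ β
  delta_lt : ∀ β < θ, δ β < l
  gamma_relLE_delta : ∀ β < θ, RelLE rX (γ β) (δ β)
  gamma_zero : 0 < θ → γ 0 = 0
  gamma_strictMono : ∀ β' β, β' < β → β < θ → γ β' < γ β
  gamma_continuous : ∀ β < θ, Order.IsSuccLimit β → γ β = sSup (γ '' Set.Iio β)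
  rel_iff : ∀ β₀ < θ, ∀ β₁ < θ, (rT β₀ β₁ ↔ rX (γ β₀) (γ β₁))
  gamma_succ : ∀ β, β + 1 < θ → γ (β + 1) = δ β + 1
  pred_mem : ∀ β, β + 1 < θ → ∀ pT pX,
    IsTreePred rT pT (β + 1) → IsTreePred rX pX (γ (β + 1)) → MemInterval rX γ δ pT pX

/-!
Induct on `ξ`. If `γ ξ ≤_X η` then `ζ = ξ` works, as `η ≤_X α ≤_X δ ξ`. Otherwise
`η <_X γ ξ`, and `η` lies below a point of an earlier interval `I_β` with `β <_T ξ`: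
for `ξ = β + 1` below `pred_X (γ ξ)`, which lies in `I_{pred_T ξ}`; for limit `ξ`, by
continuity of `γ` and cofinality of `[0, ξ)_T`, below `γ β` for some `β <_T ξ`.
The induction hypothesis at `β` finishes the proof.
-/

namespace RelLE

variable {r : Ordinal.{u} → Ordinal.{u} → Prop}

theorem trans {a b c : Ordinal.{u}} (hab : RelLE r a b) (hbc : RelLE r b c)
    (htr : ∀ {a b c}, r a b → r b c → r a c) : RelLE r a c := by
  rcases hab with rfl | hab
  · exact hbc
  · rcases hbc with rfl | hbc
    · exact Or.inr hab
    · exact Or.inr (htr hab hbc)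

theorem trans_rel {a b c : Ordinal.{u}} (hab : RelLE r a b) (hbc : r b c)
    (htr : ∀ {a b c}, r a b → r b c → r a c) : r a c := by
  rcases hab with rfl | hab
  · exact hbc
  · exact htr hab hbc

end RelLE

namespace IsTreeOrder

variable {l : Ordinal.{u}} {r : Ordinal.{u} → Ordinal.{u} → Prop}

theorem relLE_or_rel_of_relLE (hr : IsTreeOrder l r) {a b c : Ordinal.{u}}
    (hac : RelLE r a c) (hbc : RelLE r b c) : RelLE r a b ∨ r b a := by
  rcases hbc with rfl | hbc
  · exact Or.inl hac
  rcases hac with rfl | hac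
  · exact Or.inr hbc
  rcases hr.branch_linear hac hbc with h | h | h
  · exact Or.inl (Or.inr h)
  · exact Or.inl (Or.inl h)
  · exact Or.inr h

theorem rel_of_lt_of_rel_of_rel (hr : IsTreeOrder l r) {a b c : Ordinal.{u}}
    (hac : r a c) (hbc : r b c) (hab : a < b) : r a b := by
  rcases hr.branch_linear hac hbc with h | rfl | h
  · exact h
  · exact absurd hab (lt_irrefl a)
  · exact absurd (hr.lt_of_rel h) hab.asymm

theorem exists_isTreePred (hr : IsTreeOrder l r) {α : Ordinal.{u}} (hα : α + 1 < l) :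
    ∃ p, IsTreePred r p (α + 1) :=
  (hr.pred_exists hα).imp fun _ hp => hp

end IsTreeOrder

namespace IsT1System

variable {θ l : Ordinal.{u}} {rT rX : Ordinal.{u} → Ordinal.{u} → Prop}
  {γ δ : Ordinal.{u} → Ordinal.{u}}

theorem gamma_mem_interval (hsys : IsT1System θ l rT rX γ δ) {β : Ordinal.{u}} (hβ : β < θ) :
    MemInterval rX γ δ β (γ β) :=
  ⟨Or.inl rfl, hsys.gamma_relLE_delta β hβ⟩

theorem gamma_mono (hsys : IsT1System θ l rT rX γ δ) {β' β : Ordinal.{u}} (hβ'β : β' ≤ β)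
    (hβ : β < θ) : γ β' ≤ γ β := by
  rcases hβ'β.eq_or_lt with rfl | hlt
  · exact le_rfl
  · exact (hsys.gamma_strictMono β' β hlt hβ).le

theorem exists_lt_gamma_of_lt_gamma_of_isSuccLimit (hsys : IsT1System θ l rT rX γ δ)
    {ξ η : Ordinal.{u}} (hξ : ξ < θ) (hlim : Order.IsSuccLimit ξ) (hη : η < γ ξ) :
    ∃ β < ξ, η < γ β := by
  rw [hsys.gamma_continuous ξ hξ hlim] at hη
  obtain ⟨_, ⟨β, hβ, rfl⟩, hηβ⟩ := exists_lt_of_lt_csSup (Set.Nonempty.image γ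
    ⟨0, hlim.bot_lt⟩) hη
  exact ⟨β, hβ, hηβ⟩

theorem exists_rel_mem_interval_relLE_of_rel_gamma_succ (hT : IsTreeOrder θ rT)
    (hX : IsTreeOrder l rX) (hsys : IsT1System θ l rT rX γ δ) {β η : Ordinal.{u}}
    (hβ : β + 1 < θ) (hη : rX η (γ (β + 1))) :
    ∃ ζ, rT ζ (β + 1) ∧ ∃ α, MemInterval rX γ δ ζ α ∧ RelLE rX η α := by
  obtain ⟨pT, hpT⟩ := hT.exists_isTreePred hβ
  have hγl : δ β + 1 < l :=
    hsys.gamma_succ β hβ ▸ (hsys.gamma_le_delta _ hβ).trans_lt (hsys.delta_lt _ hβ)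
  obtain ⟨pX, hpX⟩ := hX.exists_isTreePred hγl
  rw [← hsys.gamma_succ β hβ] at hpX
  exact ⟨pT, hpT.1, pX, hsys.pred_mem β hβ pT pX hpT hpX, hpX.2 η hη⟩

theorem exists_rel_mem_interval_relLE_of_rel_gamma_of_isSuccLimit (hT : IsTreeOrder θ rT)
    (hX : IsTreeOrder l rX) (hsys : IsT1System θ l rT rX γ δ) {ξ η : Ordinal.{u}}
    (hξ : ξ < θ) (hlim : Order.IsSuccLimit ξ) (hη : rX η (γ ξ)) :
    ∃ ζ, rT ζ ξ ∧ ∃ α, MemInterval rX γ δ ζ α ∧ RelLE rX η α := by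
  obtain ⟨β', hβ'ξ, hηβ'⟩ :=
    hsys.exists_lt_gamma_of_lt_gamma_of_isSuccLimit hξ hlim (hX.lt_of_rel hη)
  obtain ⟨β, hβ'β, hβξ⟩ := hT.limit_cofinal hξ hlim β' hβ'ξ
  have hβθ : β < θ := (hT.lt_of_rel hβξ).trans hξ
  have hηβ : η < γ β := hηβ'.trans_le (hsys.gamma_mono hβ'β hβθ)
  have hγβ : rX (γ β) (γ ξ) := (hsys.rel_iff β hβθ ξ hξ).mp hβξ
  exact ⟨β, hβξ, γ β, hsys.gamma_mem_interval hβθ,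
    Or.inr (hX.rel_of_lt_of_rel_of_rel hη hγβ hηβ)⟩

theorem exists_rel_mem_interval_relLE_of_rel_gamma (hT : IsTreeOrder θ rT)
    (hX : IsTreeOrder l rX) (hsys : IsT1System θ l rT rX γ δ) {ξ η : Ordinal.{u}}
    (hξ : ξ < θ) (hη : rX η (γ ξ)) :
    ∃ ζ, rT ζ ξ ∧ ∃ α, MemInterval rX γ δ ζ α ∧ RelLE rX η α := by
  rcases Ordinal.zero_or_succ_or_isSuccLimit ξ with rfl | ⟨β, rfl⟩ | hlim
  · rw [hsys.gamma_zero hξ] at hη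
    exact absurd (hX.lt_of_rel hη) (not_lt_zero (a := η))
  · rw [Order.succ_eq_add_one] at hξ hη ⊢
    exact exists_rel_mem_interval_relLE_of_rel_gamma_succ hT hX hsys hξ hη
  · exact exists_rel_mem_interval_relLE_of_rel_gamma_of_isSuccLimit hT hX hsys hξ hlim hη

end IsT1System

/-- If `(γ, δ)` is a T1-system from `(θ, rT)` to `(l, rX)`, `ξ < θ`, `α ∈ I_ξ` and
`η ≤_X α`, then `η ∈ I_ζ` for some `ζ ≤_T ξ`. -/
theorem treeEmbedding_intervals_cover_branches
    {θ l : Ordinal.{u}} {rT rX : Ordinal.{u} → Ordinal.{u} → Prop}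
    {γ δ : Ordinal.{u} → Ordinal.{u}}
    (hT : IsTreeOrder θ rT) (hX : IsTreeOrder l rX)
    (hsys : IsT1System θ l rT rX γ δ)
    {ξ α η : Ordinal.{u}} (hξ : ξ < θ) (hα : MemInterval rX γ δ ξ α)
    (hη : RelLE rX η α) :
    ∃ ζ, RelLE rT ζ ξ ∧ MemInterval rX γ δ ζ η := by
  induction ξ using WellFoundedLT.induction generalizing α with
  | ind ξ ih =>
  rcases hX.relLE_or_rel_of_relLE hα.1 hη with hγη | hηγ
  · exact ⟨ξ, Or.inl rfl, hγη, hη.trans hα.2 hX.rel_trans⟩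
  obtain ⟨β, hβξ, α', hα', hηα'⟩ :=
    hsys.exists_rel_mem_interval_relLE_of_rel_gamma hT hX hξ hηγ
  have hβlt : β < ξ := hT.lt_of_rel hβξ
  obtain ⟨ζ, hζβ, hζ⟩ := ih β hβlt (hβlt.trans hξ) hα' hηα'
  exact ⟨ζ, Or.inr (hζβ.trans_rel hβξ hT.rel_trans), hζ⟩
end

section
/- Let θ and λ be ordinals, let <_T be an iteration tree order on θ and <_X an iteration tree order on λ, and let (γ_β, δ_β)_{β<θ} be an almost-T1-system from (θ,<_T) to (λ,<_X), i.e. a system satisfying all requirements of a T1-system except that the map β ↦ γ_β need not be continuous at limit ordinals (it is still required that γ_β be a limit ordinal for limit β). Define γ'_β = γ_β for β = 0 and for β a successor ordinal, and γ'_β = sup_{β'<β} γ_{β'} for β a limit ordinal. Then: (1) (γ'_β, δ_β)_{β<θ} is a T1-system from (θ,<_T) to (λ,<_X); (2) it is the unique T1-system whose δ-sequence is (δ_β)_{β<θ}; (3) for every limit ordinal β < θ one has γ'_β ≤_X γ_β and γ'_β = sup_{β'<β} γ_{β'} = sup_{β'<β} (δ_{β'} + 1). -/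
/-!
At a limit `β` let `μ = sup_{β' < β} γ β'`; it is a limit ordinal with `μ ≤ γ β`. Since the
`T`-branch below `β` is cofinal in `β` and `γ` maps it into the `X`-branch below `γ β`, that
`X`-branch is cofinal in `μ`, so closedness of `X`-branches gives `μ ≤_X γ β`. Hence lowering
`γ β` to `μ` leaves every relation `γ β' <_X γ β` intact, and comparisons with a limit `β₀` are
recovered from the cofinal `T`-branch below it by closedness of `T`-branches. Uniqueness holds
because `γ 0 = 0`, `γ (β + 1) = δ β + 1` and continuity determine `γ` from `δ`.
-/

universe u

/-- An almost-T1-system: as a T1-system, except that `β ↦ γ β` need not be continuous at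
limit ordinals; it is still required that `γ β` be a limit ordinal for limit `β`. -/
structure IsAlmostT1System (θ l : Ordinal.{u}) (rT rX : Ordinal.{u} → Ordinal.{u} → Prop)
    (γ δ : Ordinal.{u} → Ordinal.{u}) : Prop where
  gamma_le_delta : ∀ β < θ, γ β ≤ δ β
  delta_lt : ∀ β < θ, δ β < l
  gamma_relLE_delta : ∀ β < θ, RelLE rX (γ β) (δ β)
  gamma_zero : 0 < θ → γ 0 = 0
  gamma_strictMono : ∀ β' β, β' < β → β < θ → γ β' < γ β
  gamma_isLimit : ∀ β < θ, Order.IsSuccLimit β → Order.IsSuccLimit (γ β)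
  rel_iff : ∀ β₀ < θ, ∀ β₁ < θ, (rT β₀ β₁ ↔ rX (γ β₀) (γ β₁))
  gamma_succ : ∀ β, β + 1 < θ → γ (β + 1) = δ β + 1
  pred_mem : ∀ β, β + 1 < θ → ∀ pT pX,
    IsTreePred rT pT (β + 1) → IsTreePred rX pX (γ (β + 1)) → MemInterval rX γ δ pT pX

open Order Set

namespace IsTreeOrder

variable {l : Ordinal.{u}} {r : Ordinal.{u} → Ordinal.{u} → Prop}

theorem relLE_trans (h : IsTreeOrder l r) {a b c : Ordinal.{u}}
    (hab : RelLE r a b) (hbc : RelLE r b c) : RelLE r a c := by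
  rcases hab with rfl | hab
  · exact hbc
  rcases hbc with rfl | hbc
  · exact Or.inr hab
  · exact Or.inr (h.rel_trans hab hbc)

theorem relLE_trans_rel (h : IsTreeOrder l r) {a b c : Ordinal.{u}}
    (hab : RelLE r a b) (hbc : r b c) : r a c := by
  rcases hab with rfl | hab
  exacts [hbc, h.rel_trans hab hbc]

theorem rel_trans_relLE (h : IsTreeOrder l r) {a b c : Ordinal.{u}}
    (hab : r a b) (hbc : RelLE r b c) : r a c := by
  rcases hbc with rfl | hbc
  exacts [hab, h.rel_trans hab hbc]

theorem rel_of_lt (h : IsTreeOrder l r) {a b c : Ordinal.{u}}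
    (hac : r a c) (hbc : r b c) (hab : a < b) : r a b := by
  rcases h.branch_linear hac hbc with hab' | rfl | hba
  · exact hab'
  · exact absurd hab (lt_irrefl a)
  · exact absurd (h.lt_of_rel hba) hab.not_gt

theorem rel_of_isSuccLimit_of_cofinal (h : IsTreeOrder l r) {μ α : Ordinal.{u}}
    (hαl : α < l) (hμ : IsSuccLimit μ) (hμα : μ < α)
    (hcof : ∀ ξ < μ, ∃ ζ, ξ ≤ ζ ∧ ζ < μ ∧ r ζ α) : r μ α := by
  induction α using WellFoundedLT.induction with
  | _ α IH =>
  rcases Ordinal.zero_or_succ_or_isSuccLimit α with rfl | ⟨a, rfl⟩ | hα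
  · exact absurd hμα zero_le.not_gt
  · rw [succ_eq_add_one] at hαl hcof ⊢
    obtain ⟨p, hp, hmax⟩ := h.pred_exists hαl
    -- every node of the branch below `a + 1` is `≤ p`, so cofinality in `μ` forces `μ ≤ p`
    have hμp : μ ≤ p := by
      by_contra! hpμ
      obtain ⟨ζ, hpζ, -, hζ⟩ := hcof (p + 1) (hμ.add_one_lt hpμ)
      rcases hmax ζ hζ with rfl | hζp
      · exact (lt_add_one ζ).not_ge hpζ
      · exact (h.lt_of_rel hζp).not_ge ((lt_add_one p).le.trans hpζ)
    rcases hμp.eq_or_lt with rfl | hμp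
    · exact hp
    refine h.rel_trans (IH p (h.lt_of_rel hp) ((h.lt_of_rel hp).trans hαl) hμp fun ξ hξ => ?_) hp
    obtain ⟨ζ, hξζ, hζμ, hζ⟩ := hcof ξ hξ
    rcases hmax ζ hζ with rfl | hζp
    · exact absurd hζμ hμp.not_gt
    · exact ⟨ζ, hξζ, hζμ, hζp⟩
  · exact h.limit_closed hαl hα hμ hμα hcof

end IsTreeOrder

namespace Ordinal

variable {f g : Ordinal.{u} → Ordinal.{u}} {β : Ordinal.{u}}

theorem sSup_image_Iio_le (hf : MonotoneOn f (Iic β)) : sSup (f '' Iio β) ≤ f β :=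
  csSup_le' <| forall_mem_image.2 fun _ hb => hf (mem_Iic.2 hb.le) (mem_Iic.2 le_rfl) hb.le

theorem lt_sSup_image_Iio (hβ : IsSuccLimit β) (hf : StrictMonoOn f (Iio β)) {b : Ordinal.{u}}
    (hb : b < β) : f b < sSup (f '' Iio β) :=
  (hf hb (hβ.add_one_lt hb) (lt_add_one b)).trans_le
    (le_csSup bddAbove_of_small (mem_image_of_mem f (hβ.add_one_lt hb)))

theorem isSuccLimit_sSup_image_Iio (hβ : IsSuccLimit β) (hf : StrictMonoOn f (Iio β)) :
    IsSuccLimit (sSup (f '' Iio β)) := by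
  refine isSuccLimit_iff.2 ⟨(lt_sSup_image_Iio hβ hf hβ.pos).ne_bot, by_contra fun h => ?_⟩
  obtain ⟨b, hb, hfb⟩ := csSup_mem_of_not_isSuccPrelimit h
  exact (lt_sSup_image_Iio hβ hf hb).ne hfb

theorem sSup_image_Iio_eq_of_le_of_le_add_one (hβ : IsSuccLimit β) (hfg : ∀ b < β, f b ≤ g b)
    (hgf : ∀ b < β, g b ≤ f (b + 1)) : sSup (f '' Iio β) = sSup (g '' Iio β) :=
  csSup_eq_csSup_of_forall_exists_le
    (forall_mem_image.2 fun b hb => ⟨g b, mem_image_of_mem g hb, hfg b hb⟩)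
    (forall_mem_image.2 fun b hb =>
      ⟨f (b + 1), mem_image_of_mem f (hβ.add_one_lt hb), hgf b hb⟩)

end Ordinal

open Ordinal

open Classical in
noncomputable def supAtLimits (γ : Ordinal.{u} → Ordinal.{u}) (β : Ordinal.{u}) : Ordinal.{u} :=
  if IsSuccLimit β then sSup (γ '' Iio β) else γ β

section supAtLimits

variable {γ : Ordinal.{u} → Ordinal.{u}} {β : Ordinal.{u}}

theorem supAtLimits_of_isSuccLimit (hβ : IsSuccLimit β) :
    supAtLimits γ β = sSup (γ '' Iio β) :=
  if_pos hβ

theorem supAtLimits_of_not_isSuccLimit (hβ : ¬IsSuccLimit β) : supAtLimits γ β = γ β :=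
  if_neg hβ

theorem supAtLimits_zero : supAtLimits γ 0 = γ 0 :=
  supAtLimits_of_not_isSuccLimit not_isSuccLimit_zero

theorem supAtLimits_add_one : supAtLimits γ (β + 1) = γ (β + 1) :=
  supAtLimits_of_not_isSuccLimit (not_isSuccLimit_add_one β)

theorem eq_supAtLimits {γ' : Ordinal.{u} → Ordinal.{u}} (h₀ : γ' 0 = γ 0)
    (hsucc : ∀ β, γ' (β + 1) = γ (β + 1))
    (hlim : ∀ β, IsSuccLimit β → γ' β = sSup (γ '' Iio β)) : γ' = supAtLimits γ := by
  funext β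
  rcases zero_or_succ_or_isSuccLimit β with rfl | ⟨b, rfl⟩ | hβ
  · rw [h₀, supAtLimits_zero]
  · rw [succ_eq_add_one, hsucc, supAtLimits_add_one]
  · rw [hlim β hβ, supAtLimits_of_isSuccLimit hβ]

end supAtLimits

theorem IsT1System.gamma_unique {θ l : Ordinal.{u}} {rT rX : Ordinal.{u} → Ordinal.{u} → Prop}
    {γ₁ γ₂ δ : Ordinal.{u} → Ordinal.{u}} (h₁ : IsT1System θ l rT rX γ₁ δ)
    (h₂ : IsT1System θ l rT rX γ₂ δ) {β : Ordinal.{u}} (hβ : β < θ) : γ₁ β = γ₂ β := by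
  induction β using limitRecOn with
  | zero => rw [h₁.gamma_zero hβ, h₂.gamma_zero hβ]
  | add_one b _ => rw [h₁.gamma_succ b hβ, h₂.gamma_succ b hβ]
  | limit β hlim IH =>
    rw [h₁.gamma_continuous β hβ hlim, h₂.gamma_continuous β hβ hlim]
    exact congrArg sSup (image_congr fun b hb => IH b hb (hb.trans hβ))

namespace IsAlmostT1System

variable {θ l : Ordinal.{u}} {rT rX : Ordinal.{u} → Ordinal.{u} → Prop}
  {γ δ : Ordinal.{u} → Ordinal.{u}} {b β : Ordinal.{u}}

theorem strictMonoOn (hs : IsAlmostT1System θ l rT rX γ δ) : StrictMonoOn γ (Iio θ) :=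
  fun _ _ _ hβ h => hs.gamma_strictMono _ _ h hβ

theorem lt_supAtLimits (hs : IsAlmostT1System θ l rT rX γ δ) (hb : b < β) (hβ : β < θ) :
    γ b < supAtLimits γ β := by
  by_cases hlim : IsSuccLimit β
  · rw [supAtLimits_of_isSuccLimit hlim]
    exact lt_sSup_image_Iio hlim (hs.strictMonoOn.mono (Iio_subset_Iio hβ.le)) hb
  · rw [supAtLimits_of_not_isSuccLimit hlim]
    exact hs.gamma_strictMono b β hb hβ

theorem supAtLimits_le (hs : IsAlmostT1System θ l rT rX γ δ) (hβ : β < θ) :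
    supAtLimits γ β ≤ γ β := by
  by_cases hlim : IsSuccLimit β
  · rw [supAtLimits_of_isSuccLimit hlim]
    exact sSup_image_Iio_le (hs.strictMonoOn.monotoneOn.mono (Iic_subset_Iio.2 hβ))
  · rw [supAtLimits_of_not_isSuccLimit hlim]

theorem strictMonoOn_supAtLimits (hs : IsAlmostT1System θ l rT rX γ δ) :
    StrictMonoOn (supAtLimits γ) (Iio θ) :=
  fun _ hb _ hβ hbβ => (hs.supAtLimits_le hb).trans_lt (hs.lt_supAtLimits hbβ hβ)

theorem supAtLimits_relLE (hs : IsAlmostT1System θ l rT rX γ δ) (hT : IsTreeOrder θ rT)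
    (hX : IsTreeOrder l rX) (hβ : β < θ) : RelLE rX (supAtLimits γ β) (γ β) := by
  by_cases hlim : IsSuccLimit β
  swap
  · exact Or.inl (supAtLimits_of_not_isSuccLimit hlim)
  rcases (hs.supAtLimits_le hβ).eq_or_lt with heq | hlt
  · exact Or.inl heq
  have hmono : StrictMonoOn γ (Iio β) := hs.strictMonoOn.mono (Iio_subset_Iio hβ.le)
  refine Or.inr (hX.rel_of_isSuccLimit_of_cofinal
    ((hs.gamma_le_delta β hβ).trans_lt (hs.delta_lt β hβ)) ?_ hlt fun ξ hξ => ?_)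
  · rw [supAtLimits_of_isSuccLimit hlim]
    exact isSuccLimit_sSup_image_Iio hlim hmono
  rw [supAtLimits_of_isSuccLimit hlim] at hξ
  obtain ⟨_, ⟨b, hb, rfl⟩, hξb⟩ := exists_lt_of_lt_csSup' hξ
  obtain ⟨b', hbb', hb'⟩ := hT.limit_cofinal hβ hlim b hb
  have hb'β : b' < β := hT.lt_of_rel hb'
  exact ⟨γ b', hξb.le.trans (hmono.monotoneOn (hbb'.trans_lt hb'β) hb'β hbb'),
    hs.lt_supAtLimits hb'β hβ, (hs.rel_iff b' (hb'β.trans hβ) β hβ).1 hb'⟩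

theorem rel_supAtLimits_of_rel (hs : IsAlmostT1System θ l rT rX γ δ) (hT : IsTreeOrder θ rT)
    (hX : IsTreeOrder l rX) (hβ : β < θ) (hbβ : rT b β) : rX (γ b) (supAtLimits γ β) := by
  have hb : b < β := hT.lt_of_rel hbβ
  have hγ : rX (γ b) (γ β) := (hs.rel_iff b (hb.trans hβ) β hβ).1 hbβ
  rcases hs.supAtLimits_relLE hT hX hβ with heq | hrel
  · exact heq ▸ hγ
  · exact hX.rel_of_lt hγ hrel (hs.lt_supAtLimits hb hβ)

theorem rel_iff_supAtLimits (hs : IsAlmostT1System θ l rT rX γ δ) (hT : IsTreeOrder θ rT)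
    (hX : IsTreeOrder l rX) {β₀ β₁ : Ordinal.{u}} (hβ₀ : β₀ < θ) (hβ₁ : β₁ < θ) :
    rT β₀ β₁ ↔ rX (supAtLimits γ β₀) (supAtLimits γ β₁) := by
  refine ⟨fun h => hX.relLE_trans_rel (hs.supAtLimits_relLE hT hX hβ₀)
    (hs.rel_supAtLimits_of_rel hT hX hβ₁ h), fun h => ?_⟩
  have hlt : β₀ < β₁ := (hs.strictMonoOn_supAtLimits.lt_iff_lt hβ₀ hβ₁).1 (hX.lt_of_rel h)
  have hγ : rX (supAtLimits γ β₀) (γ β₁) :=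
    hX.rel_trans_relLE h (hs.supAtLimits_relLE hT hX hβ₁)
  by_cases hlim : IsSuccLimit β₀
  · -- `β₀` is a limit of its own `rT`-branch, all of which lies below `β₁`
    refine hT.rel_of_isSuccLimit_of_cofinal hβ₁ hlim hlt fun ξ hξ => ?_
    obtain ⟨b, hξb, hb⟩ := hT.limit_cofinal hβ₀ hlim ξ hξ
    have hbβ₀ : b < β₀ := hT.lt_of_rel hb
    exact ⟨b, hξb, hbβ₀, (hs.rel_iff b (hbβ₀.trans hβ₀) β₁ hβ₁).2
      (hX.rel_trans (hs.rel_supAtLimits_of_rel hT hX hβ₀ hb) hγ)⟩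
  · rw [supAtLimits_of_not_isSuccLimit hlim] at hγ
    exact (hs.rel_iff β₀ hβ₀ β₁ hβ₁).2 hγ

theorem sSup_image_Iio_supAtLimits (hs : IsAlmostT1System θ l rT rX γ δ) (hβ : β < θ)
    (hlim : IsSuccLimit β) : sSup (supAtLimits γ '' Iio β) = sSup (γ '' Iio β) :=
  sSup_image_Iio_eq_of_le_of_le_add_one hlim (fun _ hb => hs.supAtLimits_le (hb.trans hβ))
    fun b hb => by
      rw [supAtLimits_add_one]
      exact (hs.gamma_strictMono b (b + 1) (lt_add_one b) ((hlim.add_one_lt hb).trans hβ)).le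

theorem sSup_image_Iio_delta_add_one (hs : IsAlmostT1System θ l rT rX γ δ) (hβ : β < θ)
    (hlim : IsSuccLimit β) : sSup (γ '' Iio β) = sSup ((fun b => δ b + 1) '' Iio β) :=
  sSup_image_Iio_eq_of_le_of_le_add_one hlim
    (fun b hb => (hs.gamma_le_delta b (hb.trans hβ)).trans (lt_add_one _).le)
    fun b hb => (hs.gamma_succ b ((hlim.add_one_lt hb).trans hβ)).ge

theorem isT1System_supAtLimits (hs : IsAlmostT1System θ l rT rX γ δ) (hT : IsTreeOrder θ rT)
    (hX : IsTreeOrder l rX) : IsT1System θ l rT rX (supAtLimits γ) δ where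
  gamma_le_delta β hβ := (hs.supAtLimits_le hβ).trans (hs.gamma_le_delta β hβ)
  delta_lt := hs.delta_lt
  gamma_relLE_delta β hβ :=
    hX.relLE_trans (hs.supAtLimits_relLE hT hX hβ) (hs.gamma_relLE_delta β hβ)
  gamma_zero h := supAtLimits_zero.trans (hs.gamma_zero h)
  gamma_strictMono b β hbβ hβ := hs.strictMonoOn_supAtLimits (hbβ.trans hβ) hβ hbβ
  gamma_continuous β hβ hlim :=
    (supAtLimits_of_isSuccLimit hlim).trans (hs.sSup_image_Iio_supAtLimits hβ hlim).symm
  rel_iff _ hβ₀ _ hβ₁ := hs.rel_iff_supAtLimits hT hX hβ₀ hβ₁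
  gamma_succ β hβ := supAtLimits_add_one.trans (hs.gamma_succ β hβ)
  pred_mem β hβ pT pX hpT hpX := by
    rw [supAtLimits_add_one] at hpX
    obtain ⟨hγpT, hδpT⟩ := hs.pred_mem β hβ pT pX hpT hpX
    exact ⟨hX.relLE_trans (hs.supAtLimits_relLE hT hX ((hT.lt_of_rel hpT.1).trans hβ)) hγpT, hδpT⟩

end IsAlmostT1System

/-- Given an almost-T1-system `(γ, δ)` from `(θ, rT)` to `(l, rX)`, let `γ'` agree with `γ`
at `0` and at successor ordinals, and be given by `γ' β = sup_{β' < β} γ β'` at limit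
ordinals.  Then (1) `(γ', δ)` is a T1-system; (2) it is the unique T1-system with
δ-sequence `δ`; (3) for every limit `β < θ`, `γ' β ≤_X γ β` and
`γ' β = sup_{β' < β} γ β' = sup_{β' < β} (δ β' + 1)`. -/
theorem almostT1System_to_T1System
    {θ l : Ordinal.{u}} {rT rX : Ordinal.{u} → Ordinal.{u} → Prop}
    {γ δ γ' : Ordinal.{u} → Ordinal.{u}}
    (hT : IsTreeOrder θ rT) (hX : IsTreeOrder l rX)
    (hsys : IsAlmostT1System θ l rT rX γ δ)
    (hγ'₀ : γ' 0 = γ 0)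
    (hγ'succ : ∀ β, γ' (β + 1) = γ (β + 1))
    (hγ'lim : ∀ β, Order.IsSuccLimit β → γ' β = sSup (γ '' Set.Iio β)) :
    IsT1System θ l rT rX γ' δ ∧
      (∀ γ'', IsT1System θ l rT rX γ'' δ → ∀ β < θ, γ'' β = γ' β) ∧
      ∀ β < θ, Order.IsSuccLimit β →
        RelLE rX (γ' β) (γ β) ∧
          γ' β = sSup (γ '' Set.Iio β) ∧
            γ' β = sSup ((fun β' => δ β' + 1) '' Set.Iio β) := by
  obtain rfl : γ' = supAtLimits γ := eq_supAtLimits hγ'₀ hγ'succ hγ'lim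
  have hT1 := hsys.isT1System_supAtLimits hT hX
  refine ⟨hT1, fun γ'' h'' β hβ => h''.gamma_unique hT1 hβ, fun β hβ hlim => ?_⟩
  have hsup := supAtLimits_of_isSuccLimit (γ := γ) hlim
  exact ⟨hsys.supAtLimits_relLE hT hX hβ, hsup,
    hsup.trans (hsys.sSup_image_Iio_delta_add_one hβ hlim)⟩
end

section
/- Let λ be an ordinal, let <_X be an iteration tree order on λ, and let t assign to each ordinal ζ with ζ+1 < λ a value in {0,1}. Let S be the smallest subset of the ordinals below λ that contains 0, contains ζ+1 whenever t(ζ) = 1, and contains every limit ordinal μ < λ in which S ∩ μ is cofinal; let (λ^α)_{α<ι} be the strictly increasing enumeration of S, let L^α be the ordinal interval [λ^α, λ^{α+1}) (and L^α = [λ^α, λ) if α+1 = ι), and for δ < λ let η_δ be the unique α < ι with δ ∈ L^α. Define the relation <_{X/T} on ι by the recursion: β <_{X/T} α iff there is δ <_X λ^α with β ≤_{X/T} η_δ (where β ≤_{X/T} η means β = η or β <_{X/T} η); this recursion is legitimate because δ <_X λ^α implies η_δ < α. Then: (i) <_{X/T} is transitive; (ii) β <_{X/T} α implies β < α; (iii)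 if α < ι is a limit ordinal then {β : β <_{X/T} α} is cofinal in α. -/
/-!
Since `δ <_X λ^α` forces `δ < λ^α`, the index `η_δ` of the interval containing `δ` is below `α`;
so `<_{X/T}` is the transitive closure of a relation that strictly lowers indices, which gives
(i) and (ii) by induction on `α`. For (iii), the closure of `S` under cofinal limits makes
`λ^α` the supremum of the earlier `λ^ζ` when `α` is a limit, hence a limit ordinal; the branch
`[0, λ^α)_X` is then cofinal in `λ^α`, and `δ ≥ λ^γ` on it gives `η_δ ≥ γ`.
-/

universe u

/-- `S` contains `0`, contains `ζ + 1` whenever `t ζ = true` (and `ζ + 1 < l`), and contains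
every limit ordinal `μ < l` in which `S ∩ μ` is cofinal. -/
def SClosed (l : Ordinal.{u}) (t : Ordinal.{u} → Bool) (S : Set Ordinal.{u}) : Prop :=
  (0 < l → 0 ∈ S) ∧
    (∀ ζ, ζ + 1 < l → t ζ = true → ζ + 1 ∈ S) ∧
    ∀ μ, μ < l → Order.IsSuccLimit μ → (∀ γ < μ, ∃ β, γ ≤ β ∧ β < μ ∧ β ∈ S) → μ ∈ S

/-- The smallest subset of the ordinals below `l` which contains `0`, contains `ζ + 1`
whenever `t ζ = true`, and contains every limit ordinal `μ < l` in which it is cofinal.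
(It is automatically contained in `Set.Iio l` since `Set.Iio l` is closed under the rules.) -/
def InS (l : Ordinal.{u}) (t : Ordinal.{u} → Bool) : Set Ordinal.{u} :=
  ⋂₀ {S | SClosed l t S}

open Order Set

theorem sSup_notMem_of_forall_exists_gt {α : Type*} [ConditionallyCompleteLinearOrder α]
    {A : Set α} (hbdd : BddAbove A) (hA : ∀ a ∈ A, ∃ b ∈ A, a < b) : sSup A ∉ A := fun hs =>
  let ⟨_, hb, hlt⟩ := hA _ hs
  (le_csSup hbdd hb).not_gt hlt

theorem isSuccLimit_csSup_of_forall_exists_gt {α : Type*} [ConditionallyCompleteLinearOrder α]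
    {A : Set α} (hne : A.Nonempty) (hbdd : BddAbove A) (hA : ∀ a ∈ A, ∃ b ∈ A, a < b) :
    IsSuccLimit (sSup A) := by
  by_contra hlim
  exact sSup_notMem_of_forall_exists_gt hbdd hA (csSup_mem_of_not_isSuccLimit hne hbdd hlim)

theorem sClosed_inS {l : Ordinal.{u}} {t : Ordinal.{u} → Bool} : SClosed l t (InS l t) :=
  ⟨fun h0 _ hS => hS.1 h0, fun ζ hζ ht _ hS => hS.2.1 ζ hζ ht, fun μ hμ hlim hcof S hS =>
    hS.2.2 μ hμ hlim fun γ hγ =>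
      let ⟨β, hγβ, hβμ, hβ⟩ := hcof γ hγ
      ⟨β, hγβ, hβμ, hβ S hS⟩⟩

theorem lt_of_mem_inS {l : Ordinal.{u}} {t : Ordinal.{u} → Bool} {s : Ordinal.{u}}
    (hs : s ∈ InS l t) : s < l :=
  hs (Iio l) ⟨id, fun _ hζ _ => hζ, fun _ hμ _ _ => hμ⟩

section Enumeration

variable {l ι : Ordinal.{u}} {e η : Ordinal.{u} → Ordinal.{u}}

theorem index_lt_iff_lt_enum (he : StrictMonoOn e (Iio ι))
    (hη : ∀ δ < l, η δ < ι ∧ e (η δ) ≤ δ ∧ (η δ + 1 < ι → δ < e (η δ + 1)))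
    {α δ : Ordinal.{u}} (hα : α < ι) (hδ : δ < l) : η δ < α ↔ δ < e α := by
  obtain ⟨hηι, heη, hlt_next⟩ := hη δ hδ
  constructor
  · intro h
    have hsucc : η δ + 1 ≤ α := add_one_le_of_lt h
    exact (hlt_next (hsucc.trans_lt hα)).trans_le
      ((he.le_iff_le (hsucc.trans_lt hα) hα).2 hsucc)
  · intro h
    by_contra! hle
    exact (heη.trans_lt h).not_ge ((he.le_iff_le hα hηι).2 hle)

theorem isSuccLimit_enum {S : Set Ordinal.{u}}
    (hS : ∀ μ < l, IsSuccLimit μ → (∀ γ < μ, ∃ β, γ ≤ β ∧ β < μ ∧ β ∈ S) → μ ∈ S)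
    (he : StrictMonoOn e (Iio ι)) (he_mem : ∀ α < ι, e α ∈ S)
    (he_surj : ∀ s ∈ S, ∃ α < ι, e α = s) {α : Ordinal.{u}} (hα : α < ι) (hαl : e α < l)
    (hlim : IsSuccLimit α) : IsSuccLimit (e α) := by
  set A := e '' Iio α
  have hle : ∀ a ∈ A, a ≤ e α := by
    rintro _ ⟨ζ, hζ, rfl⟩
    exact (he (hζ.trans hα) hα hζ).le
  have hbdd : BddAbove A := ⟨e α, hle⟩
  have hne : A.Nonempty := ⟨e 0, 0, hlim.bot_lt, rfl⟩
  have hnomax : ∀ a ∈ A, ∃ b ∈ A, a < b := by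
    rintro _ ⟨ζ, hζ, rfl⟩
    have hsucc : ζ + 1 < α := by simpa only [Order.succ_eq_add_one] using hlim.succ_lt hζ
    exact ⟨e (ζ + 1), ⟨ζ + 1, hsucc, rfl⟩, he (hζ.trans hα) (hsucc.trans hα) (lt_add_one ζ)⟩
  have hsup_le : sSup A ≤ e α := csSup_le hne hle
  have hsup_notMem := sSup_notMem_of_forall_exists_gt hbdd hnomax
  have hsup_lim := isSuccLimit_csSup_of_forall_exists_gt hne hbdd hnomax
  have hsup_mem : sSup A ∈ S := by
    refine hS _ (hsup_le.trans_lt hαl) hsup_lim fun γ hγ => ?_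
    obtain ⟨_, ⟨ζ, hζ, rfl⟩, hγζ⟩ := exists_lt_of_lt_csSup hne hγ
    exact ⟨e ζ, hγζ.le, (le_csSup hbdd ⟨ζ, hζ, rfl⟩).lt_of_ne
      fun h => hsup_notMem (h ▸ ⟨ζ, hζ, rfl⟩), he_mem ζ (hζ.trans hα)⟩
  obtain ⟨β, hβ, hβsup⟩ := he_surj _ hsup_mem
  have hαβ : α ≤ β := not_lt.1 fun h => hsup_notMem ⟨β, h, hβsup⟩
  rwa [← hsup_le.antisymm (hβsup ▸ (he.le_iff_le hα hβ).2 hαβ)]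

end Enumeration

/-- The recursion defining `<_{X/T}`, where `N δ α` stands for `δ <_X λ^α`. -/
structure IsFactorRel (ι : Ordinal.{u}) (N : Ordinal.{u} → Ordinal.{u} → Prop)
    (η : Ordinal.{u} → Ordinal.{u}) (F : Ordinal.{u} → Ordinal.{u} → Prop) : Prop where
  lt_bound : ∀ β α, F β α → α < ι
  rel_iff : ∀ α < ι, ∀ β, F β α ↔ ∃ δ, N δ α ∧ (β = η δ ∨ F β (η δ))

namespace IsFactorRel

variable {ι : Ordinal.{u}} {N : Ordinal.{u} → Ordinal.{u} → Prop} {η : Ordinal.{u} → Ordinal.{u}}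
  {F : Ordinal.{u} → Ordinal.{u} → Prop}

theorem lt_of_rel (hF : IsFactorRel ι N η F) (hN : ∀ α < ι, ∀ δ, N δ α → η δ < α)
    {α β : Ordinal.{u}} (hβα : F β α) : β < α := by
  induction α using WellFoundedLT.induction generalizing β with
  | ind α IH =>
    have hα := hF.lt_bound β α hβα
    obtain ⟨δ, hδ, hβ | hβ⟩ := (hF.rel_iff α hα β).1 hβα
    · exact hβ ▸ hN α hα δ hδ
    · exact (IH _ (hN α hα δ hδ) hβ).trans (hN α hα δ hδ)

theorem trans (hF : IsFactorRel ι N η F) (hN : ∀ α < ι, ∀ δ, N δ α → η δ < α)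
    {α β γ : Ordinal.{u}} (hγβ : F γ β) (hβα : F β α) : F γ α := by
  induction α using WellFoundedLT.induction generalizing β with
  | ind α IH =>
    have hα := hF.lt_bound β α hβα
    obtain ⟨δ, hδ, hβ | hβ⟩ := (hF.rel_iff α hα β).1 hβα
    · exact (hF.rel_iff α hα γ).2 ⟨δ, hδ, .inr (hβ ▸ hγβ)⟩
    · exact (hF.rel_iff α hα γ).2 ⟨δ, hδ, .inr (IH _ (hN α hα δ hδ) hγβ hβ)⟩

end IsFactorRel

/-- Let `rX` be an iteration tree order on `l` and let `t` assign to each `ζ` with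
`ζ + 1 < l` a value in `{0, 1}` (here: a boolean).  Let `e = (λ^α)_{α < ι}` be the strictly
increasing enumeration of the set `S = InS l t`, for `δ < l` let `η δ` be the unique `α < ι`
with `δ` in the interval `L^α = [e α, e (α + 1))` (resp. `[e α, l)` if `α + 1 = ι`), and let
`rF` be the factor tree relation `<_{X/T}` on `ι`, defined by the recursion
`β <_F α ↔ ∃ δ <_X e α, β ≤_F η δ`.  Then the recursion is legitimate
(`δ <_X e α → η δ < α`), and: (i) `rF` is transitive; (ii) `β <_F α → β < α`; (iii) if
`α < ι` is a limit ordinal then `{β : β <_F α}` is cofinal in `α`. -/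
theorem factorTreeOrder_basic
    {l ι : Ordinal.{u}} {rX : Ordinal.{u} → Ordinal.{u} → Prop} {t : Ordinal.{u} → Bool}
    (hX : IsTreeOrder l rX)
    (e η : Ordinal.{u} → Ordinal.{u}) (rF : Ordinal.{u} → Ordinal.{u} → Prop)
    (he_mem : ∀ α < ι, e α ∈ InS l t)
    (he_mono : ∀ α β, α < β → β < ι → e α < e β)
    (he_surj : ∀ s ∈ InS l t, ∃ α < ι, e α = s)
    (hη : ∀ δ < l, η δ < ι ∧ e (η δ) ≤ δ ∧ (η δ + 1 < ι → δ < e (η δ + 1)))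
    (hdom : ∀ β α, rF β α → α < ι)
    (hrF : ∀ α < ι, ∀ β, rF β α ↔ ∃ δ, rX δ (e α) ∧ (β = η δ ∨ rF β (η δ))) :
    (∀ α < ι, ∀ δ, rX δ (e α) → η δ < α) ∧
      (∀ α β γ, rF γ β → rF β α → rF γ α) ∧
      (∀ α β, rF β α → β < α) ∧
      ∀ α < ι, Order.IsSuccLimit α → ∀ γ < α, ∃ β, γ ≤ β ∧ rF β α := by
  have he : StrictMonoOn e (Iio ι) := fun α _ β hβ hαβ => he_mono α β hαβ hβ
  have he_lt : ∀ α < ι, e α < l := fun α hα => lt_of_mem_inS (he_mem α hα)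
  have hlegit : ∀ α < ι, ∀ δ, rX δ (e α) → η δ < α := fun α hα δ hδ =>
    (index_lt_iff_lt_enum he hη hα ((hX.lt_of_rel hδ).trans (he_lt α hα))).2 (hX.lt_of_rel hδ)
  have hF : IsFactorRel ι (fun δ α => rX δ (e α)) η rF := ⟨hdom, hrF⟩
  refine ⟨hlegit, fun _ _ _ => hF.trans hlegit, fun _ _ => hF.lt_of_rel hlegit, ?_⟩
  intro α hα hlim γ hγα
  have heα_lim := isSuccLimit_enum sClosed_inS.2.2 he he_mem he_surj hα (he_lt α hα) hlim
  obtain ⟨δ, hγδ, hδ⟩ :=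
    hX.limit_cofinal (he_lt α hα) heα_lim (e γ) (he (hγα.trans hα) hα hγα)
  refine ⟨η δ, not_lt.1 fun hηγ => ?_, (hrF α hα _).2 ⟨δ, hδ, .inl rfl⟩⟩
  have hδl := (hX.lt_of_rel hδ).trans (he_lt α hα)
  exact hγδ.not_gt ((index_lt_iff_lt_enum he hη (hγα.trans hα) hδl).1 hηγ)
end
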